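/- arXiv:2110.07099 — 2 statements merged into one kernel-verified Lean document; each statement's English description precedes it below -/
import Mathlib

section
/- L² Markov-type inverse inequality on [−1,1]: For every natural number k and every real polynomial p with deg p ≤ k, ( ∫_{−1}^{1} p′(x)² dx )^{1/2} ≤ √3 · k² · ( ∫_{−1}^{1} p(x)² dx )^{1/2}. -/
open Polynomial

/-! Auxiliary development: integrals of polynomials over `[-1,1]`,
Legendre polynomials via Rodrigues' formula, and the key norm computations. -/

noncomputable def JJ (f : Polynomial ℝ) : ℝ := ∫ x in (-1:ℝ)..1, f.eval x

lemma JJ_intble (f : Polynomial ℝ) :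
    IntervalIntegrable (fun x => f.eval x) MeasureTheory.volume (-1:ℝ) 1 :=
  f.continuous.intervalIntegrable _ _

lemma JJ_add (f g : Polynomial ℝ) : JJ (f + g) = JJ f + JJ g := by
  simp only [JJ, eval_add]
  exact intervalIntegral.integral_add (JJ_intble f) (JJ_intble g)

lemma JJ_sub (f g : Polynomial ℝ) : JJ (f - g) = JJ f - JJ g := by
  simp only [JJ, eval_sub]
  exact intervalIntegral.integral_sub (JJ_intble f) (JJ_intble g)

lemma JJ_zero : JJ 0 = 0 := by simp [JJ]

lemma JJ_Cmul (c : ℝ) (f : Polynomial ℝ) : JJ (C c * f) = c * JJ f := by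
  simp only [JJ, eval_mul, eval_C]
  exact intervalIntegral.integral_const_mul c _

lemma JJ_deriv (f : Polynomial ℝ) : JJ (derivative f) = f.eval 1 - f.eval (-1) := by
  have h : ∀ x ∈ Set.uIcc (-1:ℝ) 1, HasDerivAt (fun y => f.eval y) ((derivative f).eval x) x :=
    fun x _ => f.hasDerivAt x
  exact intervalIntegral.integral_eq_sub_of_hasDerivAt h (JJ_intble _)

lemma JJ_nonneg (f : Polynomial ℝ) : 0 ≤ JJ (f * f) := by
  apply intervalIntegral.integral_nonneg (by norm_num)
  intro x _
  simp only [eval_mul]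
  exact mul_self_nonneg _

lemma JJ_ibp (f g : Polynomial ℝ) :
    JJ (derivative f * g) =
      f.eval 1 * g.eval 1 - f.eval (-1) * g.eval (-1) - JJ (f * derivative g) := by
  have h := JJ_deriv (f * g)
  rw [derivative_mul, JJ_add] at h
  simp only [eval_mul] at h
  linarith

lemma JJ_cs (f g : Polynomial ℝ) : (JJ (f * g))^2 ≤ JJ (f * f) * JJ (g * g) := by
  have h : ∀ t : ℝ, 0 ≤ JJ (f*f) * (t*t) + (2 * JJ (f*g)) * t + JJ (g*g) := by
    intro t
    have h0 := JJ_nonneg (C t * f + g)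
    have h1 : (C t * f + g) * (C t * f + g)
        = C t * (C t * (f * f)) + (C t * (f*g) + (C t * (f*g) + g*g)) := by ring
    rw [h1, JJ_add, JJ_Cmul, JJ_Cmul, JJ_add, JJ_Cmul, JJ_add, JJ_Cmul] at h0
    nlinarith [h0]
  have hd := discrim_le_zero h
  rw [discrim] at hd
  nlinarith [hd]

/-! ### Legendre polynomials via Rodrigues -/

noncomputable def ww (k : ℕ) : Polynomial ℝ := ((X : Polynomial ℝ)^2 - 1)^k

noncomputable def Leg (k : ℕ) : Polynomial ℝ := derivative^[k] (ww k)

lemma ww_monic (k : ℕ) : (ww k).Monic := by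
  have h : ((X : Polynomial ℝ)^2 - 1) = X^2 - C 1 := by simp
  rw [ww, h]
  exact (monic_X_pow_sub_C (1:ℝ) two_ne_zero).pow k

lemma ww_natDegree (k : ℕ) : (ww k).natDegree = 2*k := by
  have h : ((X : Polynomial ℝ)^2 - 1) = X^2 - C 1 := by simp
  rw [ww, h, natDegree_pow, natDegree_X_pow_sub_C]
  ring

lemma ww_coeff (k : ℕ) : (ww k).coeff (2*k) = 1 := by
  have := (ww_monic k).coeff_natDegree
  rwa [ww_natDegree] at this

lemma ww_dvd (k : ℕ) : ∀ j, j ≤ k →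
    ((X : Polynomial ℝ)^2 - 1)^(k-j) ∣ derivative^[j] (ww k) := by
  intro j
  induction j with
  | zero => intro _; simpa [ww] using dvd_refl _
  | succ j ih =>
    intro hj
    obtain ⟨g, hg⟩ := ih (Nat.le_of_succ_le hj)
    rw [Function.iterate_succ_apply', hg, derivative_mul, derivative_pow]
    have h1 : k - j - 1 = k - (j+1) := by omega
    have h2 : k - j = (k - (j+1)) + 1 := by omega
    rw [h1]
    exact dvd_add ⟨C ((k-j : ℕ) : ℝ) * derivative ((X : Polynomial ℝ)^2 - 1) * g, by ring⟩
      ((pow_dvd_pow _ (by omega)).mul_right _)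

lemma ww_eval_zero (k j : ℕ) (h : j < k) (x : ℝ) (hx : x^2 - 1 = 0) :
    (derivative^[j] (ww k)).eval x = 0 := by
  obtain ⟨g, hg⟩ := ww_dvd k j h.le
  rw [hg, eval_mul, eval_pow]
  have h1 : (((X : Polynomial ℝ)^2 - 1)).eval x = 0 := by simpa using hx
  rw [h1, zero_pow (by omega), zero_mul]

lemma JJ_ww_ibp (k : ℕ) : ∀ j, j ≤ k → ∀ g : Polynomial ℝ,
    JJ (derivative^[j] (ww k) * g) = (-1:ℝ)^j * JJ (ww k * derivative^[j] g) := by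
  intro j
  induction j with
  | zero => intro _ g; simp
  | succ j ih =>
    intro hj g
    rw [Function.iterate_succ_apply', JJ_ibp]
    rw [ww_eval_zero k j (by omega) 1 (by norm_num),
        ww_eval_zero k j (by omega) (-1) (by norm_num)]
    rw [ih (by omega) (derivative g)]
    rw [← Function.iterate_succ_apply]
    ring

lemma Leg_orth (k : ℕ) (g : Polynomial ℝ) (hg : g.natDegree < k) : JJ (Leg k * g) = 0 := by
  rw [Leg, JJ_ww_ibp k k le_rfl g, iterate_derivative_eq_zero hg, mul_zero, JJ_zero, mul_zero]

lemma iter2k (k : ℕ) : derivative^[2*k] (ww k) = C ((Nat.factorial (2*k) : ℝ)) := by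
  have h1 : (derivative^[2*k] (ww k)).natDegree ≤ 0 := by
    have := natDegree_iterate_derivative (ww k) (2*k)
    rw [ww_natDegree] at this; omega
  rw [eq_C_of_natDegree_le_zero h1, coeff_iterate_derivative]
  rw [zero_add, ww_coeff]
  rw [Nat.descFactorial_self]
  simp

noncomputable def Ik (k : ℕ) : ℝ := JJ ((1 - (X : Polynomial ℝ)^2)^k)

lemma ww_eq (k : ℕ) : ww k = C ((-1:ℝ)^k) * (1 - (X : Polynomial ℝ)^2)^k := by
  rw [ww, show ((X : Polynomial ℝ)^2 - 1) = (-1) * (1 - X^2) by ring, mul_pow]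
  congr 1
  rw [map_pow, map_neg, map_one]

lemma JJ_ww_eq (k : ℕ) : JJ (ww k) = (-1:ℝ)^k * Ik k := by
  rw [ww_eq, JJ_Cmul, Ik]

lemma Leg_norm (k : ℕ) : JJ (Leg k * Leg k) = (Nat.factorial (2*k) : ℝ) * Ik k := by
  have h1 : JJ (Leg k * Leg k) = (-1:ℝ)^k * JJ (ww k * derivative^[k] (Leg k)) := by
    rw [← JJ_ww_ibp k k le_rfl (Leg k)]; rfl
  have h2 : derivative^[k] (Leg k) = C ((Nat.factorial (2*k) : ℝ)) := by
    rw [Leg, ← Function.iterate_add_apply, ← two_mul, iter2k]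
  rw [h1, h2, mul_comm (ww k) _, JJ_Cmul, JJ_ww_eq]
  ring_nf
  rw [show k*2 = 2*k from by ring, pow_mul]
  norm_num

lemma Ik_zero : Ik 0 = 2 := by
  simp [Ik, JJ]
  norm_num

lemma Ik_rec (k : ℕ) : (2*(k:ℝ)+3) * Ik (k+1) = (2*(k:ℝ)+2) * Ik k := by
  have hpoly : derivative ((X : Polynomial ℝ) * (1 - X^2)^(k+1)) =
      C (2*(k:ℝ)+3) * (1 - (X:Polynomial ℝ)^2)^(k+1) - C (2*(k:ℝ)+2) * (1 - X^2)^k := by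
    rw [derivative_mul, derivative_pow, derivative_X]
    simp only [Nat.add_sub_cancel, derivative_sub, derivative_one, derivative_pow,
      derivative_X, zero_sub, Nat.cast_add, Nat.cast_one]
    push_cast
    simp only [map_add, map_mul, map_ofNat, C_eq_natCast, C_1]
    ring
  have h := JJ_deriv ((X : Polynomial ℝ) * (1 - X^2)^(k+1))
  rw [hpoly, JJ_sub, JJ_Cmul, JJ_Cmul] at h
  have he1 : ((X : Polynomial ℝ) * (1 - X^2)^(k+1)).eval 1 = 0 := by
    simp [eval_pow, zero_pow]
  have he2 : ((X : Polynomial ℝ) * (1 - X^2)^(k+1)).eval (-1) = 0 := by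
    simp [eval_pow, zero_pow]
  rw [he1, he2] at h
  have hIk : Ik (k+1) = JJ ((1 - (X : Polynomial ℝ)^2)^(k+1)) := rfl
  have hIk2 : Ik k = JJ ((1 - (X : Polynomial ℝ)^2)^k) := rfl
  rw [hIk, hIk2]
  linarith

lemma Ik_pos (k : ℕ) : 0 < Ik k := by
  induction k with
  | zero => rw [Ik_zero]; norm_num
  | succ k ih =>
    have h := Ik_rec k
    nlinarith [Nat.cast_nonneg (α := ℝ) k]

lemma Ik_closed (k : ℕ) :
    (2*(k:ℝ)+1) * (Nat.factorial (2*k) : ℝ) * Ik k = 2 * 4^k * (Nat.factorial k : ℝ)^2 := by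
  induction k with
  | zero => simp [Ik_zero]
  | succ k ih =>
    have hrec := Ik_rec k
    have hf1 : (Nat.factorial (2*(k+1)) : ℝ) = (2*(k:ℝ)+2) * (2*(k:ℝ)+1) * (Nat.factorial (2*k) : ℝ) := by
      have : 2*(k+1) = (2*k) + 1 + 1 := by ring
      rw [this, Nat.factorial_succ, Nat.factorial_succ]
      push_cast; ring
    have hf2 : (Nat.factorial (k+1) : ℝ) = ((k:ℝ)+1) * (Nat.factorial k : ℝ) := by
      rw [Nat.factorial_succ]; push_cast; ring
    rw [hf1, hf2]
    push_cast
    linear_combination ((2*(k:ℝ)+2)*(2*(k:ℝ)+1)*(Nat.factorial (2*k) : ℝ)) * hrec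
      + (2*(k:ℝ)+2)^2 * ih

lemma Leg_natDegree_le (k : ℕ) : (Leg k).natDegree ≤ k := by
  have := natDegree_iterate_derivative (ww k) k
  rw [ww_natDegree] at this
  rw [Leg]
  omega

lemma Leg_coeff (k : ℕ) : (Leg k).coeff k = (((2*k).descFactorial k : ℕ) : ℝ) := by
  rw [Leg, coeff_iterate_derivative]
  have h : k + k = 2*k := by ring
  rw [h, ww_coeff]
  simp

lemma Leg_coeff_ne (k : ℕ) : (Leg k).coeff k ≠ 0 := by
  rw [Leg_coeff]
  have h : ¬ ((2*k).descFactorial k = 0) := by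
    rw [Nat.descFactorial_eq_zero_iff_lt]
    omega
  exact_mod_cast h

lemma ww_factor (k : ℕ) :
    ww k = ((X : Polynomial ℝ) - C 1)^k * ((X : Polynomial ℝ) - C (-1))^k := by
  rw [ww, ← mul_pow]
  congr 1
  simp only [map_one, map_neg]
  ring

lemma Leg_eval_one (k : ℕ) : (Leg k).eval 1 = 2^k * (Nat.factorial k : ℝ) := by
  rw [Leg, ww_factor, iterate_derivative_mul, eval_finset_sum]
  rw [Finset.sum_eq_single 0]
  · simp only [Nat.choose_zero_right, one_smul, Nat.sub_zero, Function.iterate_zero_apply,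
      iterate_derivative_X_sub_pow_self]
    simp only [eval_mul, eval_pow, eval_sub, eval_X, eval_C, eval_natCast]
    norm_num
    try ring
  · intro i hi hne
    rw [eval_smul, iterate_derivative_X_sub_pow]
    have h1 : k - (k - i) = i := by
      simp only [Finset.mem_range] at hi; omega
    rw [h1, eval_mul, eval_smul, eval_pow]
    simp [hne]
  · intro h; simp at h

lemma Leg_eval_negone (k : ℕ) : (Leg k).eval (-1) = (-2)^k * (Nat.factorial k : ℝ) := by
  rw [Leg, ww_factor, iterate_derivative_mul, eval_finset_sum]
  rw [Finset.sum_eq_single k]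
  · simp only [Nat.choose_self, one_smul, Nat.sub_self, Function.iterate_zero_apply,
      iterate_derivative_X_sub_pow_self]
    simp only [eval_mul, eval_pow, eval_sub, eval_X, eval_C, eval_natCast]
    norm_num
    try ring
  · intro i hi hne
    have h2 : derivative^[i] (((X : Polynomial ℝ) - C (-1))^k)
        = k.descFactorial i • ((X : Polynomial ℝ) - C (-1))^(k-i) :=
      iterate_derivative_X_sub_pow _ _ _
    rw [eval_smul, eval_mul, h2, eval_smul, eval_pow]
    have h3 : ((X : Polynomial ℝ) - C (-1)).eval (-1) = 0 := by simp
    rw [h3, zero_pow (by simp only [Finset.mem_range] at hi; omega)]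
    simp
  · intro h; simp at h

/-! ### Iterated derivative identities and the Legendre ODE -/

lemma iterD_add (n : ℕ) (f g : Polynomial ℝ) :
    derivative^[n] (f + g) = derivative^[n] f + derivative^[n] g := by
  induction n generalizing f g with
  | zero => rfl
  | succ n ih =>
    rw [Function.iterate_succ_apply, Function.iterate_succ_apply,
      Function.iterate_succ_apply, derivative_add, ih]

lemma iterD_X_mul (n : ℕ) : ∀ f : Polynomial ℝ,
    derivative^[n+1] ((X : Polynomial ℝ) * f)
      = X * derivative^[n+1] f + C ((n:ℝ)+1) * derivative^[n] f := by
  induction n with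
  | zero =>
    intro f
    simp [derivative_mul]
    ring
  | succ n ih =>
    intro f
    rw [Function.iterate_succ_apply, derivative_mul, derivative_X, one_mul, iterD_add,
      ih (derivative f)]
    rw [← Function.iterate_succ_apply derivative (n+1) f,
      ← Function.iterate_succ_apply derivative n f]
    simp only [Nat.cast_add, Nat.cast_one, map_add, map_one]
    ring

lemma iterD_sq_mul (n : ℕ) : ∀ f : Polynomial ℝ,
    derivative^[n+2] (((X : Polynomial ℝ)^2 - 1) * f)
      = ((X : Polynomial ℝ)^2 - 1) * derivative^[n+2] f
        + C (2*(n:ℝ)+4) * ((X : Polynomial ℝ) * derivative^[n+1] f)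
        + C (((n:ℝ)+2)*((n:ℝ)+1)) * derivative^[n] f := by
  induction n with
  | zero =>
    intro f
    have e2 : ∀ g : Polynomial ℝ, derivative^[2] g = derivative (derivative g) := fun g => rfl
    rw [e2, e2]
    simp only [Function.iterate_one, Function.iterate_zero_apply]
    simp [derivative_mul, derivative_sub, derivative_one, derivative_X_pow]
    norm_num
    simp only [map_ofNat]
    ring
  | succ n ih =>
    intro f
    rw [Function.iterate_succ_apply]
    have hd : derivative (((X : Polynomial ℝ)^2 - 1) * f)
        = C 2 * ((X : Polynomial ℝ) * f) + ((X : Polynomial ℝ)^2 - 1) * derivative f := by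
      simp [derivative_mul, derivative_sub, derivative_one, derivative_X_pow, map_ofNat]
      ring
    rw [hd, iterD_add, iterate_derivative_C_mul, iterD_X_mul (n+1) f, ih (derivative f)]
    rw [← Function.iterate_succ_apply derivative (n+2) f,
      ← Function.iterate_succ_apply derivative (n+1) f,
      ← Function.iterate_succ_apply derivative n f]
    simp only [Nat.cast_add, Nat.cast_one, map_add, map_mul, map_one, map_ofNat]
    ring

lemma Leg_ODE (j : ℕ) :
    ((X : Polynomial ℝ)^2 - 1) * derivative (derivative (Leg (j+1)))
      + C 2 * ((X : Polynomial ℝ) * derivative (Leg (j+1)))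
    = C (((j:ℝ)+1)*((j:ℝ)+2)) * Leg (j+1) := by
  have hD : derivative ((X : Polynomial ℝ)^2 - 1) = 2 * X := by
    simp only [derivative_sub, derivative_one, derivative_X_pow, Nat.cast_ofNat,
      map_ofNat, pow_one, sub_zero]
    ring
  have B0 : ((X : Polynomial ℝ)^2 - 1) * derivative (ww (j+1))
      = C (2*(j:ℝ)+2) * ((X : Polynomial ℝ) * ww (j+1)) := by
    rw [ww, derivative_pow, Nat.add_sub_cancel, hD]
    simp only [Nat.cast_add, Nat.cast_one, map_add, map_mul, map_one, map_ofNat]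
    ring
  have happ := congrArg (fun q => derivative^[j+2] q) B0
  rw [iterD_sq_mul j (derivative (ww (j+1))), iterate_derivative_C_mul,
    iterD_X_mul (j+1) (ww (j+1))] at happ
  have e1 : derivative^[j+2] (derivative (ww (j+1))) = derivative (derivative (Leg (j+1))) := by
    rw [← Function.iterate_succ_apply derivative (j+2) (ww (j+1)),
      Function.iterate_succ_apply' derivative (j+2) (ww (j+1)),
      Function.iterate_succ_apply' derivative (j+1) (ww (j+1))]
    rfl
  have e2 : derivative^[j+1] (derivative (ww (j+1))) = derivative (Leg (j+1)) := by
    rw [← Function.iterate_succ_apply derivative (j+1) (ww (j+1)),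
      Function.iterate_succ_apply' derivative (j+1) (ww (j+1))]
    rfl
  have e3 : derivative^[j] (derivative (ww (j+1))) = Leg (j+1) := by
    rw [← Function.iterate_succ_apply derivative j (ww (j+1))]
    rfl
  have e4 : derivative^[j+2] (ww (j+1)) = derivative (Leg (j+1)) := by
    rw [Function.iterate_succ_apply' derivative (j+1) (ww (j+1))]
    rfl
  have e5 : derivative^[j+1] (ww (j+1)) = Leg (j+1) := rfl
  rw [e1, e2, e3, e4, e5] at happ
  simp only [Nat.cast_add, Nat.cast_one, map_add, map_mul, map_one, map_ofNat] at happ ⊢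
  linear_combination happ

lemma Leg_deriv_norm (j : ℕ) :
    2 * JJ (derivative (Leg (j+1)) * derivative (Leg (j+1)))
      = ((j:ℝ)+1)*((j:ℝ)+2) * (((Leg (j+1)).eval 1)^2 + ((Leg (j+1)).eval (-1))^2) := by
  have horth : JJ (Leg (j+1) * derivative (derivative (Leg (j+1)))) = 0 := by
    apply Leg_orth
    have h1 := natDegree_derivative_le (Leg (j+1))
    have h2 := natDegree_derivative_le (derivative (Leg (j+1)))
    have h3 := Leg_natDegree_le (j+1)
    omega
  have hibp := JJ_ibp (Leg (j+1)) (derivative (Leg (j+1)))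
  rw [horth] at hibp
  have hODE1 := congrArg (fun q => q.eval 1) (Leg_ODE j)
  have hODE2 := congrArg (fun q => q.eval (-1)) (Leg_ODE j)
  simp only [eval_add, eval_mul, eval_sub, eval_pow, eval_X, eval_one, eval_C] at hODE1 hODE2
  linear_combination (2:ℝ)*hibp + ((Leg (j+1)).eval 1) * hODE1 + ((Leg (j+1)).eval (-1)) * hODE2

lemma Leg_ratio (j : ℕ) :
    2 * JJ (derivative (Leg (j+1)) * derivative (Leg (j+1)))
      = ((j:ℝ)+1)*((j:ℝ)+2)*(2*(j:ℝ)+3) * JJ (Leg (j+1) * Leg (j+1)) := by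
  have h1 := Leg_deriv_norm j
  have h2 := Leg_norm (j+1)
  have h3 := Ik_closed (j+1)
  push_cast at h3
  have h4 : ((Leg (j+1)).eval 1)^2 + ((Leg (j+1)).eval (-1))^2
      = 2 * 4^(j+1) * (Nat.factorial (j+1) : ℝ)^2 := by
    rw [Leg_eval_one, Leg_eval_negone]
    have ha : ((-2:ℝ))^(j+1) * ((-2:ℝ))^(j+1) = 4^(j+1) := by
      rw [← mul_pow]; norm_num
    have hb : ((2:ℝ))^(j+1) * ((2:ℝ))^(j+1) = 4^(j+1) := by
      rw [← mul_pow]; norm_num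
    nlinarith [ha, hb]
  rw [h2, h1, h4]
  linear_combination (-((j:ℝ)+1)*((j:ℝ)+2)) * h3

/-! ### The main induction -/

lemma cs2 (t b s u : ℝ) : (t*b + s*u)^2 ≤ (t^2+s^2)*(b^2+u^2) := by
  nlinarith [sq_nonneg (s*b - t*u)]

lemma numkey (x : ℝ) (hx : 0 ≤ x) : 3*x^4 + (x+1)*(x+2)*(2*x+3)/2 ≤ 3*(x+1)^4 := by
  nlinarith [pow_nonneg hx 3, pow_nonneg hx 2, hx]

set_option maxHeartbeats 1000000 in
lemma numlem (j : ℕ) (A B M N c cr : ℝ) (hA : 0 ≤ A) (hB : 0 ≤ B) (hM : 0 ≤ M) (hN : 0 ≤ N)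
    (hcs : cr^2 ≤ A*M) (hIH : A ≤ 3*(j:ℝ)^4*B)
    (hMN : 2*M = ((j:ℝ)+1)*((j:ℝ)+2)*(2*(j:ℝ)+3)*N) :
    A + 2*c*cr + c^2*M ≤ 3*((j:ℝ)+1)^4*(B + c^2*N) := by
  have hj : (0:ℝ) ≤ (j:ℝ) := Nat.cast_nonneg j
  set K : ℝ := ((j:ℝ)+1)*((j:ℝ)+2)*(2*(j:ℝ)+3)/2 with hK
  have hKnn : 0 ≤ K := by rw [hK]; positivity
  have hM' : M = K * N := by rw [hK]; linarith
  set a := Real.sqrt A with ha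
  set b := Real.sqrt B with hb
  set m := Real.sqrt M with hm
  set n := Real.sqrt N with hn
  set s := Real.sqrt K with hs
  set t := Real.sqrt (3*(j:ℝ)^4) with ht
  have ha2 : a^2 = A := Real.sq_sqrt hA
  have hb2 : b^2 = B := Real.sq_sqrt hB
  have hm2 : m^2 = M := Real.sq_sqrt hM
  have hn2 : n^2 = N := Real.sq_sqrt hN
  have hs2 : s^2 = K := Real.sq_sqrt hKnn
  have ht2 : t^2 = 3*(j:ℝ)^4 := Real.sq_sqrt (by positivity)
  have hann : 0 ≤ a := Real.sqrt_nonneg _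
  have hbnn : 0 ≤ b := Real.sqrt_nonneg _
  have hmnn : 0 ≤ m := Real.sqrt_nonneg _
  have hnnn : 0 ≤ n := Real.sqrt_nonneg _
  have hsnn : 0 ≤ s := Real.sqrt_nonneg _
  have htnn : 0 ≤ t := Real.sqrt_nonneg _
  have hmn : m = s * n := by
    rw [hm, hM', Real.sqrt_mul hKnn, ← hs, ← hn]
  have hab : a ≤ t * b := by
    rw [ha, ht, ← Real.sqrt_mul (by positivity)]
    exact Real.sqrt_le_sqrt hIH
  have hcr : 2*c*cr ≤ 2*(abs c)*(a*m) := by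
    have h1 : abs cr ≤ a*m := by
      have h0 : abs cr = Real.sqrt (cr^2) := (Real.sqrt_sq_eq_abs cr).symm
      rw [h0, ha, hm, ← Real.sqrt_mul hA]
      exact Real.sqrt_le_sqrt hcs
    have h2 : c*cr ≤ (abs c)*(abs cr) := by
      calc c*cr ≤ abs (c*cr) := le_abs_self _
        _ = (abs c)*(abs cr) := abs_mul c cr
    have h3 : (abs c)*(abs cr) ≤ (abs c)*(a*m) :=
      mul_le_mul_of_nonneg_left h1 (abs_nonneg c)
    linarith
  have hstep1 : A + 2*c*cr + c^2*M ≤ (a + (abs c)*m)^2 := by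
    have hsq : (a + (abs c)*m)^2 = a^2 + 2*(abs c)*(a*m) + c^2*m^2 := by
      rw [← sq_abs c]; ring
    rw [hsq, ha2, hm2]
    linarith
  have hinner : a + (abs c)*m ≤ t*b + s*((abs c)*n) := by
    rw [hmn]
    have h3 : (abs c)*(s*n) = s*((abs c)*n) := by ring
    rw [h3]
    linarith [hab]
  have hstep2 : (a + (abs c)*m)^2 ≤ (t*b + s*((abs c)*n))^2 := by
    apply pow_le_pow_left₀ (by positivity) hinner
  have hstep3 : (t*b + s*((abs c)*n))^2 ≤ (t^2 + s^2) * (b^2 + ((abs c)*n)^2) :=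
    cs2 t b s ((abs c)*n)
  have hstep4 : (t^2 + s^2) * (b^2 + ((abs c)*n)^2) = (3*(j:ℝ)^4 + K) * (B + c^2*N) := by
    rw [ht2, hs2, hb2]
    have h4 : ((abs c)*n)^2 = c^2 * N := by
      rw [mul_pow, sq_abs, hn2]
    rw [h4]
  have hstep5 : (3*(j:ℝ)^4 + K) * (B + c^2*N) ≤ 3*((j:ℝ)+1)^4*(B + c^2*N) := by
    apply mul_le_mul_of_nonneg_right _ (by positivity)
    rw [hK]
    exact numkey (j:ℝ) hj
  linarith

lemma markov_main : ∀ (k : ℕ) (p : Polynomial ℝ), p.natDegree ≤ k →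
    JJ (derivative p * derivative p) ≤ 3*(k:ℝ)^4 * JJ (p*p) := by
  intro k
  induction k with
  | zero =>
    intro p hp
    have hd : derivative p = 0 := by
      rw [eq_C_of_natDegree_le_zero hp, derivative_C]
    rw [hd, zero_mul, JJ_zero]
    simp only [Nat.cast_zero]
    nlinarith [JJ_nonneg p]
  | succ j ih =>
    intro p hp
    set c : ℝ := p.coeff (j+1) / (Leg (j+1)).coeff (j+1) with hc
    set r : Polynomial ℝ := p - C c * Leg (j+1) with hr
    have hsplit : p = r + C c * Leg (j+1) := by rw [hr]; ring
    have hrc : r.coeff (j+1) = 0 := by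
      rw [hr, coeff_sub, coeff_C_mul, hc, div_mul_cancel₀ _ (Leg_coeff_ne (j+1)), sub_self]
    have hrdeg : r.natDegree ≤ j := by
      have h1 : r.natDegree ≤ j+1 := by
        rw [hr]
        apply (natDegree_sub_le _ _).trans
        apply max_le hp
        apply natDegree_mul_le.trans
        simp [Leg_natDegree_le (j+1)]
      by_cases h0 : r = 0
      · rw [h0]; simp
      · by_contra hcon
        push_neg at hcon
        have he : r.natDegree = j+1 := by omega
        have hlc := leadingCoeff_ne_zero.mpr h0
        rw [leadingCoeff, he, hrc] at hlc
        exact hlc rfl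
    have horth : JJ (Leg (j+1) * r) = 0 := Leg_orth (j+1) r (by omega)
    have hpp : JJ (p*p) = JJ (r*r) + c^2 * JJ (Leg (j+1) * Leg (j+1)) := by
      rw [hsplit]
      have hexp : (r + C c * Leg (j+1)) * (r + C c * Leg (j+1))
          = r*r + (C c * (Leg (j+1) * r) + (C c * (Leg (j+1) * r)
              + C c * (C c * (Leg (j+1) * Leg (j+1))))) := by ring
      rw [hexp, JJ_add, JJ_add, JJ_add]
      simp only [JJ_Cmul]
      rw [horth]
      ring
    have hdsplit : derivative p = derivative r + C c * derivative (Leg (j+1)) := by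
      rw [hsplit, derivative_add, derivative_C_mul]
    have hdd : JJ (derivative p * derivative p)
        = JJ (derivative r * derivative r)
          + 2*c*JJ (derivative r * derivative (Leg (j+1)))
          + c^2 * JJ (derivative (Leg (j+1)) * derivative (Leg (j+1))) := by
      rw [hdsplit]
      have hexp : (derivative r + C c * derivative (Leg (j+1)))
            * (derivative r + C c * derivative (Leg (j+1)))
          = derivative r * derivative r
            + (C c * (derivative r * derivative (Leg (j+1)))
            + (C c * (derivative r * derivative (Leg (j+1)))
              + C c * (C c * (derivative (Leg (j+1)) * derivative (Leg (j+1)))))) := by ring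
      rw [hexp, JJ_add, JJ_add, JJ_add]
      simp only [JJ_Cmul]
      ring
    rw [hdd, hpp]
    have key := numlem j (JJ (derivative r * derivative r)) (JJ (r*r))
      (JJ (derivative (Leg (j+1)) * derivative (Leg (j+1)))) (JJ (Leg (j+1) * Leg (j+1)))
      c (JJ (derivative r * derivative (Leg (j+1))))
      (JJ_nonneg _) (JJ_nonneg _) (JJ_nonneg _) (JJ_nonneg _)
      (JJ_cs _ _) (ih r hrdeg) (Leg_ratio j)
    push_cast
    linarith [key]

/-- L² Markov-type inverse inequality on `[-1,1]`:
`‖p'‖_{L²(-1,1)} ≤ √3 k² ‖p‖_{L²(-1,1)}` for polynomials of degree at most `k`. -/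
theorem markov_L2_inverse_inequality (k : ℕ) (p : Polynomial ℝ)
    (hp : p.natDegree ≤ k) :
    Real.sqrt (∫ x in (-1:ℝ)..1, (derivative p).eval x ^ 2) ≤
      Real.sqrt 3 * (k : ℝ) ^ 2 * Real.sqrt (∫ x in (-1:ℝ)..1, p.eval x ^ 2) := by
  have e1 : (∫ x in (-1:ℝ)..1, (derivative p).eval x ^ 2)
      = JJ (derivative p * derivative p) := by
    rw [JJ]
    congr 1
    ext x
    rw [eval_mul]
    ring
  have e2 : (∫ x in (-1:ℝ)..1, p.eval x ^ 2) = JJ (p*p) := by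
    rw [JJ]
    congr 1
    ext x
    rw [eval_mul]
    ring
  rw [e1, e2]
  have h1 : Real.sqrt (JJ (derivative p * derivative p))
      ≤ Real.sqrt (3*(k:ℝ)^4 * JJ (p*p)) :=
    Real.sqrt_le_sqrt (markov_main k p hp)
  have h2 : Real.sqrt (3*(k:ℝ)^4 * JJ (p*p))
      = Real.sqrt 3 * (k:ℝ)^2 * Real.sqrt (JJ (p*p)) := by
    rw [Real.sqrt_mul (by positivity), Real.sqrt_mul (by norm_num : (0:ℝ) ≤ 3)]
    have : Real.sqrt ((k:ℝ)^4) = (k:ℝ)^2 := by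
      rw [show ((k:ℝ)^4) = ((k:ℝ)^2)^2 by ring, Real.sqrt_sq (by positivity)]
    rw [this, mul_assoc]
  rw [← h2]
  exact h1
end

section
/- Interior-point trace inverse inequality with square-root degree dependence: For every natural number k and every real polynomial p with deg p ≤ k, both |p(1/2)| and |p(−1/2)| are at most 4·√(3/π)·(4/3)^{1/4} · √(k+1) · ( ∫_{−1}^{1} p(x)² dx )^{1/2}. -/
open Polynomial Polynomial.Chebyshev Real intervalIntegral


lemma U_deg_lc : ∀ n : ℕ, ((U ℝ (n:ℤ)).natDegree = n ∧ (U ℝ (n:ℤ)).leadingCoeff = 2 ^ n)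
  | 0 => by simp [U_zero]
  | 1 => by
      constructor
      · simp [U_one]
      · simp [U_one, leadingCoeff_mul, Polynomial.leadingCoeff]
  | (n+2) => by
      have ih1 := U_deg_lc (n+1)
      have ih0 := U_deg_lc n
      have h2X : (2 * X : ℝ[X]) ≠ 0 := by
        intro h
        have := congrArg (fun q => Polynomial.coeff q 1) h
        simp at this
      have hcast : ((n+1:ℕ):ℤ) = (n:ℤ)+1 := by push_cast; ring
      have hU1ne : U ℝ ((n:ℤ)+1) ≠ 0 := by
        intro h
        have h2 : (U ℝ ((n+1:ℕ):ℤ)).leadingCoeff = 2 ^ (n+1) := ih1.2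
        rw [hcast, h] at h2
        simp at h2
        exact absurd h2.symm (by positivity)
      have hrec : U ℝ ((n+2:ℕ):ℤ) = 2 * X * U ℝ ((n:ℤ)+1) - U ℝ (n:ℤ) := by
        rw [show ((n+2:ℕ):ℤ) = (n:ℤ)+2 by push_cast; ring]
        exact U_add_two ℝ n
      have hlc2 : (2 : ℝ[X]).leadingCoeff = 2 := by
        simp [Polynomial.leadingCoeff]
      have hdegmul : (2 * X * U ℝ ((n:ℤ)+1)).natDegree = n + 2 := by
        rw [natDegree_mul h2X hU1ne]
        rw [← hcast, ih1.1]
        simp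
        ring
      have hlcmul : (2 * X * U ℝ ((n:ℤ)+1)).leadingCoeff = 2 ^ (n+2) := by
        rw [leadingCoeff_mul, ← hcast, ih1.2, leadingCoeff_mul, hlc2]
        simp
        ring
      have hlt : (U ℝ (n:ℤ)).natDegree < (2 * X * U ℝ ((n:ℤ)+1)).natDegree := by
        rw [hdegmul, ih0.1]; omega
      constructor
      · rw [hrec, natDegree_sub_eq_left_of_natDegree_lt hlt, hdegmul]
      · rw [hrec]
        have hc0 : (U ℝ (n:ℤ)).coeff (n+2) = 0 :=
          Polynomial.coeff_eq_zero_of_natDegree_lt (by rw [ih0.1]; omega)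
        rw [leadingCoeff, natDegree_sub_eq_left_of_natDegree_lt hlt, hdegmul,
          Polynomial.coeff_sub, hc0, sub_zero, ← hdegmul, ← leadingCoeff, hlcmul, hdegmul]



lemma mem_span_U (k : ℕ) : ∀ (m : ℕ) (p : ℝ[X]), p.natDegree < m → p.natDegree ≤ k →
    p ∈ Submodule.span ℝ (Set.range fun i : Fin (k+1) => U ℝ ((i:ℕ):ℤ))
  | 0, p, hm, _ => by omega
  | (m+1), p, hm, hk => by
    by_cases hp0 : p = 0
    · simp [hp0]
    · set n := p.natDegree with hn
      have hUn := U_deg_lc n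
      have hc : p.leadingCoeff / 2^n ≠ 0 := by
        apply div_ne_zero (leadingCoeff_ne_zero.mpr hp0) (by positivity)
      set q : ℝ[X] := Polynomial.C (p.leadingCoeff / 2^n) * U ℝ (n:ℤ) with hq
      have hUne : U ℝ (n:ℤ) ≠ 0 := fun h => by
        rw [h] at hUn; simp [Polynomial.leadingCoeff] at hUn
        exact absurd hUn.2.symm (by positivity)
      have hqnd : q.natDegree = n := by
        rw [hq, natDegree_C_mul hc, hUn.1]
      have hqlc : q.leadingCoeff = p.leadingCoeff := by
        rw [hq, leadingCoeff_mul, leadingCoeff_C, hUn.2]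
        field_simp
      have hqmem : q ∈ Submodule.span ℝ (Set.range fun i : Fin (k+1) => U ℝ ((i:ℕ):ℤ)) := by
        rw [hq, ← smul_eq_C_mul]
        exact Submodule.smul_mem _ _ (Submodule.subset_span ⟨⟨n, by omega⟩, rfl⟩)
      rcases eq_or_ne (p - q) 0 with hz | hnz
      · have : p = q := by linear_combination (norm := ring_nf) hz
        rw [this]; exact hqmem
      · have hqne : q ≠ 0 := by
          intro h; rw [h] at hqlc; simp at hqlc
          exact hp0 (leadingCoeff_eq_zero.mp hqlc.symm)
        have hdeg : p.degree = q.degree := by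
          rw [degree_eq_natDegree hp0, degree_eq_natDegree hqne, hqnd]
        have hlt : (p - q).degree < p.degree := degree_sub_lt hdeg hp0 hqlc.symm
        have hlt' : (p - q).natDegree < n := natDegree_lt_natDegree hnz hlt
        have hmem := mem_span_U k m (p - q) (by omega) (by omega)
        have : p = (p - q) + q := by ring
        rw [this]
        exact Submodule.add_mem _ hmem hqmem


lemma int_cos_int (c : ℤ) : (∫ θ in (0:ℝ)..π, Real.cos ((c:ℝ)*θ)) = if c = 0 then π else 0 := by
  rcases eq_or_ne c 0 with h | h
  · simp [h]
  · rw [if_neg h]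
    have hc : (c:ℝ) ≠ 0 := Int.cast_ne_zero.mpr h
    have := mul_integral_comp_mul_left (a := (0:ℝ)) (b := π) (f := fun x => Real.cos x) (c := (c:ℝ))
    rw [integral_cos] at this
    simp only [mul_zero] at this
    rw [Real.sin_int_mul_pi, Real.sin_zero, sub_zero] at this
    rcases mul_eq_zero.mp this with h' | h'
    · exact absurd h' hc
    · exact h'

lemma cont_ii (c : ℝ) (f : ℝ → ℝ) (hf : Continuous f) (a b : ℝ) :
    IntervalIntegrable (fun θ => f (c*θ)) MeasureTheory.volume a b :=
  (hf.comp (continuous_const.mul continuous_id)).intervalIntegrable a b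

lemma orth_sin (m n : ℕ) :
    (∫ θ in (0:ℝ)..π, Real.sin (((m:ℝ)+1)*θ) * Real.sin (((n:ℝ)+1)*θ))
      = if m = n then π/2 else 0 := by
  have key : ∀ θ : ℝ, Real.sin (((m:ℝ)+1)*θ) * Real.sin (((n:ℝ)+1)*θ)
      = (Real.cos ((((m:ℤ)-(n:ℤ)):ℝ)*θ) - Real.cos ((((m:ℤ)+(n:ℤ)+2):ℝ)*θ))/2 := by
    intro θ
    push_cast
    rw [show ((m:ℝ)-n)*θ = ((m:ℝ)+1)*θ - ((n:ℝ)+1)*θ by ring,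
      show ((m:ℝ)+(n:ℝ)+2)*θ = ((m:ℝ)+1)*θ + ((n:ℝ)+1)*θ by ring,
      Real.cos_sub, Real.cos_add]
    ring
  rw [integral_congr (fun θ _ => key θ)]
  have h1 := cont_ii ((((m:ℤ)-(n:ℤ)):ℝ)) Real.cos Real.continuous_cos 0 π
  have h2 := cont_ii ((((m:ℤ)+(n:ℤ)+2):ℝ)) Real.cos Real.continuous_cos 0 π
  rw [integral_div, integral_sub h1 h2]
  have e1 := int_cos_int ((m:ℤ)-(n:ℤ))
  have e2 := int_cos_int ((m:ℤ)+(n:ℤ)+2)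
  push_cast at e1 e2 ⊢
  rw [e1, e2, if_neg (by omega : ¬ ((m:ℤ)+(n:ℤ)+2 = 0))]
  rcases eq_or_ne m n with h | h
  · rw [if_pos (by omega : (m:ℤ)-(n:ℤ) = 0), if_pos h]; ring
  · rw [if_neg (by omega : ¬((m:ℤ)-(n:ℤ) = 0)), if_neg h]; ring



lemma sin_cont (m : ℕ) : Continuous (fun θ : ℝ => Real.sin (((m:ℝ)+1)*θ)) :=
  Real.continuous_sin.comp (continuous_const.mul continuous_id)

set_option maxHeartbeats 1000000 in
lemma l2_sin_sum (k : ℕ) (a : Fin (k+1) → ℝ) :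
    (∫ θ in (0:ℝ)..π, (∑ i : Fin (k+1), a i * Real.sin ((((i:ℕ):ℝ)+1)*θ))^2)
      = (π/2) * ∑ i : Fin (k+1), (a i)^2 := by
  have hsq : ∀ θ : ℝ, (∑ i : Fin (k+1), a i * Real.sin ((((i:ℕ):ℝ)+1)*θ))^2
      = ∑ i : Fin (k+1), ∑ j : Fin (k+1),
          (a i * a j) * (Real.sin ((((i:ℕ):ℝ)+1)*θ) * Real.sin ((((j:ℕ):ℝ)+1)*θ)) := by
    intro θ
    rw [sq, Finset.sum_mul_sum]
    exact Finset.sum_congr rfl fun i _ => Finset.sum_congr rfl fun j _ => by ring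
  have hii : ∀ (i j : Fin (k+1)), IntervalIntegrable
      (fun θ => (a i * a j) * (Real.sin ((((i:ℕ):ℝ)+1)*θ) * Real.sin ((((j:ℕ):ℝ)+1)*θ)))
      MeasureTheory.volume 0 π :=
    fun i j => (continuous_const.mul ((sin_cont i).mul (sin_cont j))).intervalIntegrable _ _
  rw [integral_congr (fun θ _ => hsq θ)]
  have hcont : ∀ i : Fin (k+1), Continuous (fun θ : ℝ => ∑ j : Fin (k+1),
      (a i * a j) * (Real.sin ((((i:ℕ):ℝ)+1)*θ) * Real.sin ((((j:ℕ):ℝ)+1)*θ))) := by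
    intro i
    apply continuous_finset_sum
    intro j _
    exact continuous_const.mul ((sin_cont (i:ℕ)).mul (sin_cont (j:ℕ)))
  have step1 := integral_finset_sum (μ := MeasureTheory.volume) (a := (0:ℝ)) (b := π)
    (s := Finset.univ)
    (f := fun (i : Fin (k+1)) (θ : ℝ) => ∑ j : Fin (k+1),
      (a i * a j) * (Real.sin ((((i:ℕ):ℝ)+1)*θ) * Real.sin ((((j:ℕ):ℝ)+1)*θ)))
    (fun i _ => (hcont i).intervalIntegrable _ _)
  rw [step1]
  have : ∀ i : Fin (k+1),
      (∫ θ in (0:ℝ)..π, ∑ j : Fin (k+1),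
        (a i * a j) * (Real.sin ((((i:ℕ):ℝ)+1)*θ) * Real.sin ((((j:ℕ):ℝ)+1)*θ)))
      = (a i)^2 * (π/2) := by
    intro i
    have step2 := integral_finset_sum (μ := MeasureTheory.volume) (a := (0:ℝ)) (b := π)
      (s := Finset.univ)
      (f := fun (j : Fin (k+1)) (θ : ℝ) =>
        (a i * a j) * (Real.sin ((((i:ℕ):ℝ)+1)*θ) * Real.sin ((((j:ℕ):ℝ)+1)*θ)))
      (fun j _ => hii i j)
    rw [step2]
    have hterm : ∀ j : Fin (k+1),
        (∫ θ in (0:ℝ)..π,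
          (a i * a j) * (Real.sin ((((i:ℕ):ℝ)+1)*θ) * Real.sin ((((j:ℕ):ℝ)+1)*θ)))
        = (a i * a j) * (if (i:ℕ) = (j:ℕ) then π/2 else 0) := by
      intro j
      rw [integral_const_mul, orth_sin]
    rw [Finset.sum_congr rfl fun j _ => hterm j]
    rw [Finset.sum_eq_single i]
    · simp [sq]
    · intro j _ hji
      rw [if_neg (by simpa [Fin.val_eq_val] using (Ne.symm hji)), mul_zero]
    · intro h; exact absurd (Finset.mem_univ i) h
  rw [Finset.sum_congr rfl fun i _ => this i, ← Finset.sum_mul]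
  ring


lemma subst_cos (p : Polynomial ℝ) :
    (∫ θ in (0:ℝ)..π, Real.sin θ * (p.eval (Real.cos θ))^2)
      = ∫ x in (-1:ℝ)..1, (p.eval x)^2 := by
  have h := intervalIntegral.integral_comp_smul_deriv (a := (0:ℝ)) (b := π)
    (f := Real.cos) (f' := fun θ => -Real.sin θ) (g := fun x => (p.eval x)^2)
    (fun x _ => (Real.hasDerivAt_cos x)) (Real.continuous_sin.neg.continuousOn)
    ((p.continuous).pow 2)
  simp only [Function.comp] at h
  rw [Real.cos_zero, Real.cos_pi] at h
  rw [integral_symm (-1:ℝ) 1] at h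
  have h2 : (∫ θ in (0:ℝ)..π, (-Real.sin θ) • (p.eval (Real.cos θ))^2)
      = -∫ θ in (0:ℝ)..π, Real.sin θ * (p.eval (Real.cos θ))^2 := by
    rw [← integral_neg]
    congr 1
    funext θ
    simp [smul_eq_mul]
  rw [h2] at h
  linarith [h]

lemma point_bound (k : ℕ) (a : Fin (k+1) → ℝ) (p : Polynomial ℝ) (I : ℝ)
    (hrep : ∀ θ : ℝ, p.eval (Real.cos θ) * Real.sin θ
      = ∑ i : Fin (k+1), a i * Real.sin ((((i:ℕ):ℝ)+1)*θ))
    (θ₀ x₀ : ℝ) (hc : Real.cos θ₀ = x₀) (hs : Real.sin θ₀ = Real.sqrt 3 / 2)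
    (hS : (∑ i : Fin (k+1), (a i)^2) ≤ 2/π * I) :
    |p.eval x₀| ≤ 2/Real.sqrt 3 * Real.sqrt (((k:ℝ)+1) * (2/π * I)) := by
  have s3 : Real.sqrt 3 ^ 2 = 3 := Real.sq_sqrt (by norm_num)
  have s3pos : (0:ℝ) < Real.sqrt 3 := Real.sqrt_pos.mpr (by norm_num)
  -- bound on the sine sum at θ₀
  have habs : |p.eval x₀| * (Real.sqrt 3 / 2)
      = |∑ i : Fin (k+1), a i * Real.sin ((((i:ℕ):ℝ)+1)*θ₀)| := by
    rw [← hrep θ₀, hc, hs, abs_mul, abs_of_nonneg (by positivity : (0:ℝ) ≤ Real.sqrt 3 / 2)]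
  have hsum1 : |∑ i : Fin (k+1), a i * Real.sin ((((i:ℕ):ℝ)+1)*θ₀)|
      ≤ ∑ i : Fin (k+1), |a i| := by
    refine (Finset.abs_sum_le_sum_abs _ _).trans (Finset.sum_le_sum fun i _ => ?_)
    rw [abs_mul]
    calc |a i| * |Real.sin ((((i:ℕ):ℝ)+1)*θ₀)| ≤ |a i| * 1 :=
          mul_le_mul_of_nonneg_left (Real.abs_sin_le_one _) (abs_nonneg _)
      _ = |a i| := mul_one _
  have hCS : (∑ i : Fin (k+1), |a i|)^2 ≤ ((k:ℝ)+1) * (∑ i : Fin (k+1), (a i)^2) := by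
    have := Finset.sum_mul_sq_le_sq_mul_sq Finset.univ (fun i : Fin (k+1) => |a i|)
      (fun _ => (1:ℝ))
    simp only [mul_one, one_pow, sq_abs, Finset.sum_const, Finset.card_univ,
      Fintype.card_fin, nsmul_eq_mul] at this
    calc (∑ i : Fin (k+1), |a i|)^2 ≤ (∑ i : Fin (k+1), (a i)^2) * ((k:ℝ)+1) := by
          exact_mod_cast this
      _ = ((k:ℝ)+1) * (∑ i : Fin (k+1), (a i)^2) := by ring
  have hSnn : (0:ℝ) ≤ ∑ i : Fin (k+1), (a i)^2 :=
    Finset.sum_nonneg fun i _ => sq_nonneg _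
  have hsum2 : (∑ i : Fin (k+1), |a i|) ≤ Real.sqrt (((k:ℝ)+1) * (2/π * I)) := by
    have h1 : (∑ i : Fin (k+1), |a i|)^2 ≤ ((k:ℝ)+1) * (2/π * I) :=
      hCS.trans (mul_le_mul_of_nonneg_left hS (by positivity))
    have := Real.sqrt_le_sqrt h1
    rw [Real.sqrt_sq (Finset.sum_nonneg fun i _ => abs_nonneg _)] at this
    exact this
  have key : |p.eval x₀| * (Real.sqrt 3 / 2) ≤ Real.sqrt (((k:ℝ)+1) * (2/π * I)) := by
    rw [habs]; exact hsum1.trans hsum2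
  have h2 := mul_le_mul_of_nonneg_right key (by positivity : (0:ℝ) ≤ 2/Real.sqrt 3)
  calc |p.eval x₀| = |p.eval x₀| * (Real.sqrt 3 / 2) * (2/Real.sqrt 3) := by
        field_simp
      _ ≤ Real.sqrt (((k:ℝ)+1) * (2/π * I)) * (2/Real.sqrt 3) := h2
      _ = 2/Real.sqrt 3 * Real.sqrt (((k:ℝ)+1) * (2/π * I)) := by ring

/-- Interior-point trace inverse inequality with square-root degree dependence:
`|p(±1/2)| ≤ 4 √(3/π) (4/3)^{1/4} √(k+1) ‖p‖_{L²(-1,1)}` for polynomials of degree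
at most `k`. -/
theorem interior_point_trace_inverse_inequality (k : ℕ) (p : Polynomial ℝ)
    (hp : p.natDegree ≤ k) :
    |p.eval (1/2)| ≤
        4 * Real.sqrt (3 / Real.pi) * (4/3 : ℝ) ^ ((1:ℝ)/4) * Real.sqrt ((k : ℝ) + 1)
          * Real.sqrt (∫ x in (-1:ℝ)..1, p.eval x ^ 2)
      ∧ |p.eval (-(1/2))| ≤
        4 * Real.sqrt (3 / Real.pi) * (4/3 : ℝ) ^ ((1:ℝ)/4) * Real.sqrt ((k : ℝ) + 1)
          * Real.sqrt (∫ x in (-1:ℝ)..1, p.eval x ^ 2) := by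
  -- Chebyshev-U representation
  have hspan := mem_span_U k (k+1) p (by omega) hp
  obtain ⟨a, ha⟩ := (Submodule.mem_span_range_iff_exists_fun ℝ).mp hspan
  have hrep : ∀ θ : ℝ, p.eval (Real.cos θ) * Real.sin θ
      = ∑ i : Fin (k+1), a i * Real.sin ((((i:ℕ):ℝ)+1)*θ) := by
    intro θ
    conv_lhs => rw [← ha]
    rw [Polynomial.eval_finset_sum, Finset.sum_mul]
    refine Finset.sum_congr rfl fun i _ => ?_
    rw [Polynomial.eval_smul, smul_eq_mul, mul_assoc, U_real_cos]
    norm_num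
  set I := ∫ x in (-1:ℝ)..1, p.eval x ^ 2 with hIdef
  set S := ∑ i : Fin (k+1), (a i)^2 with hSdef
  have hSnn : (0:ℝ) ≤ S := Finset.sum_nonneg fun i _ => sq_nonneg _
  -- ∫ g² ≤ I
  have hcontg : Continuous (fun θ : ℝ =>
      (∑ i : Fin (k+1), a i * Real.sin ((((i:ℕ):ℝ)+1)*θ))^2) := by
    apply Continuous.pow
    apply continuous_finset_sum
    intro i _
    exact continuous_const.mul (sin_cont (i:ℕ))
  have hcont2 : Continuous (fun θ : ℝ => Real.sin θ * (p.eval (Real.cos θ))^2) :=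
    Real.continuous_sin.mul (((p.continuous).comp Real.continuous_cos).pow 2)
  have hmon : (∫ θ in (0:ℝ)..π, (∑ i : Fin (k+1), a i * Real.sin ((((i:ℕ):ℝ)+1)*θ))^2)
      ≤ ∫ θ in (0:ℝ)..π, Real.sin θ * (p.eval (Real.cos θ))^2 := by
    apply integral_mono_on Real.pi_pos.le (hcontg.intervalIntegrable _ _)
      (hcont2.intervalIntegrable _ _)
    intro θ hθ
    rw [← hrep θ]
    have h0 : 0 ≤ Real.sin θ := Real.sin_nonneg_of_nonneg_of_le_pi hθ.1 hθ.2
    have h1 : Real.sin θ ≤ 1 := Real.sin_le_one θ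
    nlinarith [mul_nonneg (mul_nonneg (sq_nonneg (p.eval (Real.cos θ))) h0)
      (sub_nonneg.mpr h1)]
  have hSle : (π/2) * S ≤ I := by
    rw [hSdef, hIdef, ← l2_sin_sum k a, ← subst_cos p]
    exact hmon
  have hI0 : (0:ℝ) ≤ I :=
    le_trans (mul_nonneg (by positivity) hSnn) hSle
  have hS : S ≤ 2/π * I := by
    rw [show 2/π * I = 2*I/π by ring, le_div_iff₀ Real.pi_pos]
    nlinarith [hSle]
  -- bounds at the two points
  have hb1 := point_bound k a p I hrep (π/3) (1/2) Real.cos_pi_div_three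
    Real.sin_pi_div_three hS
  have hb2 := point_bound k a p I hrep (π - π/3) (-(1/2))
    (by rw [Real.cos_pi_sub, Real.cos_pi_div_three])
    (by rw [Real.sin_pi_sub]; exact Real.sin_pi_div_three) hS
  -- constant comparison
  have s3pos : (0:ℝ) < Real.sqrt 3 := Real.sqrt_pos.mpr (by norm_num)
  have sπ : (0:ℝ) < Real.sqrt π := Real.sqrt_pos.mpr Real.pi_pos
  have hone : (1:ℝ) ≤ (4/3:ℝ) ^ ((1:ℝ)/4) :=
    Real.one_le_rpow (by norm_num) (by norm_num)
  have hconst : 2/Real.sqrt 3 * Real.sqrt (2/π) ≤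
      4 * Real.sqrt (3/π) * (4/3:ℝ) ^ ((1:ℝ)/4) := by
    have h2' : 2/Real.sqrt 3 * Real.sqrt (2/π) ≤ 4 * Real.sqrt (3/π) := by
      have e4 : Real.sqrt 4 = 2 := by
        rw [show (4:ℝ) = 2^2 by norm_num, Real.sqrt_sq (by norm_num : (0:ℝ) ≤ 2)]
      have e16 : Real.sqrt 16 = 4 := by
        rw [show (16:ℝ) = 4^2 by norm_num, Real.sqrt_sq (by norm_num : (0:ℝ) ≤ 4)]
      have lhs_eq : 2/Real.sqrt 3 * Real.sqrt (2/π) = Real.sqrt ((4/3) * (2/π)) := by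
        rw [Real.sqrt_mul (by norm_num : (0:ℝ) ≤ 4/3),
          Real.sqrt_div (by norm_num : (0:ℝ) ≤ 4), e4]
      have rhs_eq : 4 * Real.sqrt (3/π) = Real.sqrt (16 * (3/π)) := by
        rw [Real.sqrt_mul (by norm_num : (0:ℝ) ≤ 16), e16]
      rw [lhs_eq, rhs_eq]
      apply Real.sqrt_le_sqrt
      rw [show (4/3:ℝ) * (2/π) = (8/3)/π by ring, show (16:ℝ) * (3/π) = 48/π by ring]
      gcongr
      norm_num
    calc 2/Real.sqrt 3 * Real.sqrt (2/π) ≤ 4 * Real.sqrt (3/π) * 1 := by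
          rw [mul_one]; exact h2'
      _ ≤ 4 * Real.sqrt (3/π) * (4/3:ℝ) ^ ((1:ℝ)/4) :=
          mul_le_mul_of_nonneg_left hone (by positivity)
  have hfinal : 2/Real.sqrt 3 * Real.sqrt (((k:ℝ)+1) * (2/π * I))
      ≤ 4 * Real.sqrt (3/π) * (4/3:ℝ) ^ ((1:ℝ)/4) * Real.sqrt ((k:ℝ)+1) * Real.sqrt I := by
    have e1 : Real.sqrt (((k:ℝ)+1) * (2/π * I))
        = Real.sqrt ((k:ℝ)+1) * (Real.sqrt (2/π) * Real.sqrt I) := by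
      rw [Real.sqrt_mul (by positivity), Real.sqrt_mul (by positivity)]
    calc 2/Real.sqrt 3 * Real.sqrt (((k:ℝ)+1) * (2/π * I))
        = (2/Real.sqrt 3 * Real.sqrt (2/π)) * (Real.sqrt ((k:ℝ)+1) * Real.sqrt I) := by
          rw [e1]; ring
      _ ≤ (4 * Real.sqrt (3/π) * (4/3:ℝ) ^ ((1:ℝ)/4)) * (Real.sqrt ((k:ℝ)+1) * Real.sqrt I) :=
          mul_le_mul_of_nonneg_right hconst (by positivity)
      _ = 4 * Real.sqrt (3/π) * (4/3:ℝ) ^ ((1:ℝ)/4) * Real.sqrt ((k:ℝ)+1) * Real.sqrt I := by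
          ring
  exact ⟨hb1.trans hfinal, hb2.trans hfinal⟩
end
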